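/- arXiv:math-ph/0301019 — 6 statements merged into one kernel-verified Lean document; each statement's English description precedes it below -/
import Mathlib

section
/- Let Γ be a lattice in ℝ^d and S ⊆ Γ with existing autocorrelation coefficients η_S(z) = dens(S ∩ (z+S)). If dens(S) = dens(Γ)/2, then S and its complement S^c = Γ \ S are homometric, i.e., η_S(z) = η_{S^c}(z) for all z ∈ ℝ^d. -/
open Filter MeasureTheory

/-- Volume of the ball of radius `n` around `0` in `ℝ^d`. -/
noncomputable def ballVol (d : ℕ) (n : ℕ) : ℝ :=
  (volume (Metric.ball (0 : Fin d → ℝ) (n : ℝ))).toReal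

/-- `T` has natural density `c` (along balls of radius `n` around `0`). -/
def HasDens {d : ℕ} (T : Set (Fin d → ℝ)) (c : ℝ) : Prop :=
  Tendsto (fun n : ℕ => ((T ∩ Metric.ball 0 (n : ℝ)).ncard : ℝ) / ballVol d n)
    atTop (nhds c)

/-- `T` has autocorrelation coefficient `c` at `z`. -/
def HasAutocorr {d : ℕ} (T : Set (Fin d → ℝ)) (z : Fin d → ℝ) (c : ℝ) : Prop :=
  Tendsto
    (fun n : ℕ => (({x | x ∈ T ∧ x ∈ Metric.ball 0 (n : ℝ) ∧ x - z ∈ T}).ncard : ℝ)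
      / ballVol d n) atTop (nhds c)

/-!
Fix `z ∈ Γ` and write `Sᶜ = Γ \ S`. Inside each ball `B_n`, inclusion–exclusion gives
`#{x ∈ Sᶜ ∩ B_n | x - z ∈ Sᶜ} + #(S ∩ B_n) + #{x ∈ B_n | x - z ∈ S}
  = #(Γ ∩ B_n) + #{x ∈ S ∩ B_n | x - z ∈ S}`.
The third term counts `S` in the translated ball `B_n - z`; as `vol B_{n+k} / vol B_n → 1`,
translating the balls by a fixed vector does not change a density, so that term also has
density `dens S`. Dividing by `vol B_n` and passing to the limit,
`η_{Sᶜ}(z) = η_S(z) + dens Γ - 2 dens S`, which is `η_S(z)` when `dens S = dens Γ / 2`.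
-/

open Topology Metric

lemma AddSubgroup.finite_inter_ball {E : Type*} [NormedAddCommGroup E] [ProperSpace E]
    (Γ : AddSubgroup E) [DiscreteTopology Γ] (x : E) (r : ℝ) :
    ((Γ : Set E) ∩ ball x r).Finite := by
  rw [Set.inter_comm]
  exact finite_isBounded_inter_isClosed (isDiscrete_iff_discreteTopology.mpr ‹_›)
    isBounded_ball AddSubgroup.isClosed_of_discrete

lemma Set.ncard_sdiff_union_add_ncard_add_ncard {α : Type*} {T S P : Set α} (hT : T.Finite)
    (hS : S ⊆ T) (hP : P ⊆ T) :
    (T \ (S ∪ P)).ncard + S.ncard + P.ncard = T.ncard + (S ∩ P).ncard := by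
  have hcompl := Set.ncard_sdiff_add_ncard_of_subset (Set.union_subset hS hP) hT
  have hunion := Set.ncard_union_add_ncard_inter S P (hT.subset hS) (hT.subset hP)
  omega

lemma AddSubgroup.ncard_autocorr_sdiff_add {G : Type*} [AddGroup G] {Γ : AddSubgroup G}
    {S B : Set G} (hS : S ⊆ Γ) (hB : ((Γ : Set G) ∩ B).Finite) {z : G} (hz : z ∈ Γ) :
    {x | x ∈ (Γ : Set G) \ S ∧ x ∈ B ∧ x - z ∈ (Γ : Set G) \ S}.ncard + (S ∩ B).ncard
        + {x | x ∈ B ∧ x - z ∈ S}.ncard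
      = ((Γ : Set G) ∩ B).ncard + {x | x ∈ S ∧ x ∈ B ∧ x - z ∈ S}.ncard := by
  have hshift : ∀ x, x - z ∈ Γ ↔ x ∈ Γ := fun x => by
    rw [sub_eq_add_neg, Γ.add_mem_cancel_right (Γ.neg_mem hz)]
  have hcount := Set.ncard_sdiff_union_add_ncard_add_ncard hB
    (S := S ∩ B) (P := {x | x ∈ B ∧ x - z ∈ S})
    (Set.inter_subset_inter_left _ hS) (fun x hx => ⟨(hshift x).1 (hS hx.2), hx.1⟩)
  have hcompl : ((Γ : Set G) ∩ B) \ (S ∩ B ∪ {x | x ∈ B ∧ x - z ∈ S})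
      = {x | x ∈ (Γ : Set G) \ S ∧ x ∈ B ∧ x - z ∈ (Γ : Set G) \ S} := by
    ext x
    simp only [Set.mem_ofPred_eq, Set.mem_sdiff, Set.mem_inter_iff, Set.mem_union,
      SetLike.mem_coe, hshift]
    tauto
  have hinter : S ∩ B ∩ {x | x ∈ B ∧ x - z ∈ S} = {x | x ∈ S ∧ x ∈ B ∧ x - z ∈ S} := by
    ext x
    simp only [Set.mem_ofPred_eq, Set.mem_inter_iff]
    tauto
  rwa [hcompl, hinter] at hcount

section BallVolume

variable {d : ℕ}

lemma ballVol_nonneg {n : ℕ} : 0 ≤ ballVol d n := ENNReal.toReal_nonneg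

lemma ballVol_pos {n : ℕ} (hn : n ≠ 0) : 0 < ballVol d n :=
  ENNReal.toReal_pos (measure_ball_pos volume 0 (by positivity)).ne' measure_ball_lt_top.ne

lemma ballVol_div_ballVol {m n : ℕ} (hm : m ≠ 0) (hn : n ≠ 0) :
    ballVol d m / ballVol d n = ((m : ℝ) / n) ^ d := by
  have hscale : ∀ {k : ℕ}, k ≠ 0 →
      ballVol d k = (k : ℝ) ^ d * (volume (ball (0 : Fin d → ℝ) 1)).toReal := by
    intro k hk
    rw [ballVol, Measure.addHaar_ball_of_pos volume 0 (by positivity), ENNReal.toReal_mul,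
      ENNReal.toReal_ofReal (by positivity), Module.finrank_fin_fun]
  have hunit : (volume (ball (0 : Fin d → ℝ) 1)).toReal ≠ 0 :=
    (ENNReal.toReal_pos (measure_ball_pos volume 0 one_pos).ne' measure_ball_lt_top.ne).ne'
  rw [hscale hm, hscale hn, mul_div_mul_right _ _ hunit, div_pow]

lemma tendsto_ballVol_add_div_ballVol_add (a b : ℕ) :
    Tendsto (fun n : ℕ => ballVol d (n + a) / ballVol d (n + b)) atTop (𝓝 1) := by
  have hratio : Tendsto (fun n : ℕ => ((a + 1 * n : ℝ) / (b + 1 * n)) ^ d) atTop (𝓝 1) := by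
    simpa only [div_one, one_pow] using
      (tendsto_add_mul_div_add_mul_atTop_nhds (a : ℝ) b 1 one_ne_zero).pow d
  refine hratio.congr' ?_
  filter_upwards [eventually_ne_atTop 0] with n hn
  rw [ballVol_div_ballVol (by omega) (by omega)]
  push_cast
  ring_nf

lemma tendsto_comp_add_div_ballVol_add {f : ℕ → ℝ} {c : ℝ}
    (hf : Tendsto (fun n => f n / ballVol d n) atTop (𝓝 c)) (a b : ℕ) :
    Tendsto (fun n => f (n + a) / ballVol d (n + b)) atTop (𝓝 c) := by
  have h := ((tendsto_add_atTop_iff_nat a).2 hf).mul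
    (tendsto_ballVol_add_div_ballVol_add (d := d) a b)
  rw [mul_one] at h
  refine h.congr' ?_
  filter_upwards [eventually_ne_atTop 0] with n hn
  rw [div_mul_div_cancel₀ (ballVol_pos (by omega)).ne']

end BallVolume

lemma HasDens.tendsto_ncard_inter_ball {d : ℕ} {S : Set (Fin d → ℝ)} {c : ℝ} (hS : HasDens S c)
    (hfin : ∀ r : ℝ, (S ∩ ball 0 r).Finite) (w : Fin d → ℝ) :
    Tendsto (fun n : ℕ => ((S ∩ ball w n).ncard : ℝ) / ballVol d n) atTop (𝓝 c) := by
  set k := ⌈‖w‖⌉₊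
  have hk : ‖w‖ ≤ k := Nat.le_ceil _
  have hinner : ∀ n : ℕ, ball (0 : Fin d → ℝ) n ⊆ ball w ↑(n + k) := fun n =>
    ball_subset_ball' (by push_cast; rw [dist_zero_left]; linarith)
  have houter : ∀ n : ℕ, ball w ↑(n + k) ⊆ ball (0 : Fin d → ℝ) ↑(n + 2 * k) := fun n =>
    ball_subset_ball' (by push_cast; rw [dist_zero_right]; linarith)
  rw [← tendsto_add_atTop_iff_nat k]
  refine tendsto_of_tendsto_of_tendsto_of_le_of_le (tendsto_comp_add_div_ballVol_add hS 0 k)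
    (tendsto_comp_add_div_ballVol_add hS (2 * k) k) (fun n => ?_) (fun n => ?_)
  · gcongr
    exacts [ballVol_nonneg, (hfin _).subset (Set.inter_subset_inter_right _ (houter n)),
      hinner n]
  · gcongr
    exacts [ballVol_nonneg, hfin _, houter n]

lemma ncard_setOf_mem_ball_sub_mem {E : Type*} [SeminormedAddCommGroup E] (S : Set E)
    (z : E) (r : ℝ) : {x | x ∈ ball 0 r ∧ x - z ∈ S}.ncard = (S ∩ ball (-z) r).ncard := by
  have hpre : {x | x ∈ ball 0 r ∧ x - z ∈ S} = (· - z) ⁻¹' (S ∩ ball (-z) r) := by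
    ext x
    simp [dist_eq_norm, and_comm]
  rw [hpre, Set.ncard_preimage_of_injective_subset_range sub_left_injective
    fun y _ => ⟨y + z, add_sub_cancel_right y z⟩]

lemma HasAutocorr.sdiff {d : ℕ} {Γ : AddSubgroup (Fin d → ℝ)} [DiscreteTopology Γ]
    {S : Set (Fin d → ℝ)} (hS : S ⊆ Γ) {z : Fin d → ℝ} (hz : z ∈ Γ) {η dS dΓ : ℝ}
    (hη : HasAutocorr S z η) (hdS : HasDens S dS) (hdΓ : HasDens (Γ : Set (Fin d → ℝ)) dΓ) :
    HasAutocorr ((Γ : Set (Fin d → ℝ)) \ S) z (η + dΓ - 2 * dS) := by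
  have hfin (w : Fin d → ℝ) (r : ℝ) : (S ∩ ball w r).Finite :=
    (Γ.finite_inter_ball w r).subset (Set.inter_subset_inter_left _ hS)
  have hshift := hdS.tendsto_ncard_inter_ball (hfin 0) (-z)
  simp only [← ncard_setOf_mem_ball_sub_mem] at hshift
  have hlim := ((hdΓ.add hη).sub hdS).sub hshift
  rw [show dΓ + η - dS - dS = η + dΓ - 2 * dS by ring] at hlim
  refine hlim.congr fun n => ?_
  have hcount := AddSubgroup.ncard_autocorr_sdiff_add hS (Γ.finite_inter_ball 0 n) hz
  simp only [← add_div, ← sub_div]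
  congr 1
  have hcount' := congrArg (Nat.cast (R := ℝ)) hcount
  push_cast at hcount'
  linarith

theorem half_density_homometric_general (d : ℕ) (Γ : AddSubgroup (Fin d → ℝ))
    (hdisc : DiscreteTopology Γ)
    (S : Set (Fin d → ℝ)) (hS : S ⊆ (Γ : Set (Fin d → ℝ)))
    (ηS ηSc : (Fin d → ℝ) → ℝ)
    (hηS : ∀ z ∈ (Γ : Set (Fin d → ℝ)), HasAutocorr S z (ηS z))
    (hηSc : ∀ z ∈ (Γ : Set (Fin d → ℝ)),
      HasAutocorr ((Γ : Set (Fin d → ℝ)) \ S) z (ηSc z))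
    (hηS0 : ∀ z ∉ (Γ : Set (Fin d → ℝ)), ηS z = 0)
    (hηSc0 : ∀ z ∉ (Γ : Set (Fin d → ℝ)), ηSc z = 0)
    (dS dΓ : ℝ) (hdS : HasDens S dS)
    (hdΓ : HasDens (Γ : Set (Fin d → ℝ)) dΓ)
    (hhalf : dS = dΓ / 2) :
    ∀ z : Fin d → ℝ, ηS z = ηSc z := by
  intro z
  by_cases hz : z ∈ (Γ : Set (Fin d → ℝ))
  · have hηSc_eq := tendsto_nhds_unique (hηSc z hz) ((hηS z hz).sdiff hS hz hdS hdΓ)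
    rw [hηSc_eq, hhalf]
    ring
  · rw [hηS0 z hz, hηSc0 z hz]

/-- if `S ⊆ Γ` has density `dens(Γ)/2`, then `S` and its
complement `S^c = Γ \ S` are homometric: `η_S(z) = η_{S^c}(z)` for all `z`. -/
theorem half_density_homometric (d : ℕ) (Γ : AddSubgroup (Fin d → ℝ))
    (hdisc : DiscreteTopology Γ)
    (hcocompact : CompactSpace ((Fin d → ℝ) ⧸ Γ))
    (S : Set (Fin d → ℝ)) (hS : S ⊆ (Γ : Set (Fin d → ℝ)))
    (ηS ηSc : (Fin d → ℝ) → ℝ)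
    (hηS : ∀ z ∈ (Γ : Set (Fin d → ℝ)), HasAutocorr S z (ηS z))
    (hηSc : ∀ z ∈ (Γ : Set (Fin d → ℝ)),
      HasAutocorr ((Γ : Set (Fin d → ℝ)) \ S) z (ηSc z))
    (hηS0 : ∀ z ∉ (Γ : Set (Fin d → ℝ)), ηS z = 0)
    (hηSc0 : ∀ z ∉ (Γ : Set (Fin d → ℝ)), ηSc z = 0)
    (dS dΓ : ℝ) (hdS : HasDens S dS)
    (hdΓ : HasDens (Γ : Set (Fin d → ℝ)) dΓ)
    (hhalf : dS = dΓ / 2) :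
    ∀ z : Fin d → ℝ, ηS z = ηSc z :=
  half_density_homometric_general d Γ hdisc S hS ηS ηSc hηS hηSc hηS0 hηSc0 dS dΓ hdS hdΓ hhalf
end

section
/- The sets Ω_a = 4ℤ and Ω_c = 4ℤ + 2 are the unique pair of subsets of ℤ satisfying Ω_a = 2Ω_a ∪ 2Ω_c and Ω_c = 2Ω_b ∪ 2Ω_d, where Ω_b, Ω_d are determined by Ω_a ∪ Ω_b ∪ Ω_c ∪ Ω_d = ℤ with the four sets pairwise disjoint, Ω_b = (2Ω_a + 1) ∪ (2Ω_b + 1), and Ω_d = (2Ω_c + 1) ∪ (2Ω_d + 1). In particular, for any solution (Ω_a, Ω_b, Ω_c, Ω_d) of this system, Ω_a = 4ℤ and Ω_c = 4ℤ + 2. -/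
/-- `2S = {2x : x ∈ S}` for `S ⊆ ℤ`. -/
def dbl (S : Set ℤ) : Set ℤ := {y | ∃ x ∈ S, y = 2 * x}

/-- `2S + 1 = {2x + 1 : x ∈ S}` for `S ⊆ ℤ`. -/
def dblAdd1 (S : Set ℤ) : Set ℤ := {y | ∃ x ∈ S, y = 2 * x + 1}

/-- for any solution of the paperfolding fixed point equations,
the sets `Ω_a` and `Ω_c` are uniquely determined: `Ω_a = 4ℤ` and `Ω_c = 4ℤ + 2`. -/
theorem paperfolding_Oa_Oc (Ωa Ωb Ωc Ωd : Set ℤ)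
    (hab : Disjoint Ωa Ωb) (hac : Disjoint Ωa Ωc) (had : Disjoint Ωa Ωd)
    (hbc : Disjoint Ωb Ωc) (hbd : Disjoint Ωb Ωd) (hcd : Disjoint Ωc Ωd)
    (hcover : Ωa ∪ Ωb ∪ Ωc ∪ Ωd = Set.univ)
    (ha : Ωa = dbl Ωa ∪ dbl Ωc)
    (hb : Ωb = dblAdd1 Ωa ∪ dblAdd1 Ωb)
    (hc : Ωc = dbl Ωb ∪ dbl Ωd)
    (hd : Ωd = dblAdd1 Ωc ∪ dblAdd1 Ωd) :
    Ωa = {x : ℤ | ∃ k : ℤ, x = 4 * k} ∧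
    Ωc = {x : ℤ | ∃ k : ℤ, x = 4 * k + 2} := by
  -- Ωb and Ωd consist of odd numbers
  have hbodd : ∀ x ∈ Ωb, Odd x := by
    intro x hx
    rw [hb] at hx
    rcases hx with ⟨y, _, rfl⟩ | ⟨y, _, rfl⟩ <;> exact ⟨y, by ring⟩
  have hdodd : ∀ x ∈ Ωd, Odd x := by
    intro x hx
    rw [hd] at hx
    rcases hx with ⟨y, _, rfl⟩ | ⟨y, _, rfl⟩ <;> exact ⟨y, by ring⟩
  -- every even number is in Ωa ∪ Ωc, every odd number is in Ωb ∪ Ωd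
  have heven : ∀ x : ℤ, Even x → x ∈ Ωa ∪ Ωc := by
    intro x hx
    have : x ∈ Ωa ∪ Ωb ∪ Ωc ∪ Ωd := by rw [hcover]; trivial
    rcases this with ((h | h) | h) | h
    · exact Or.inl h
    · exact absurd (hbodd x h) (Int.not_odd_iff_even.mpr hx)
    · exact Or.inr h
    · exact absurd (hdodd x h) (Int.not_odd_iff_even.mpr hx)
  have hodd : ∀ x : ℤ, Odd x → x ∈ Ωb ∪ Ωd := by
    intro x hx
    have : x ∈ Ωa ∪ Ωb ∪ Ωc ∪ Ωd := by rw [hcover]; trivial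
    rcases this with ((h | h) | h) | h
    · rw [ha] at h
      rcases h with ⟨y, _, rfl⟩ | ⟨y, _, rfl⟩ <;>
        exact absurd hx (by rw [Int.not_odd_iff_even]; exact ⟨y, by ring⟩)
    · exact Or.inl h
    · rw [hc] at h
      rcases h with ⟨y, _, rfl⟩ | ⟨y, _, rfl⟩ <;>
        exact absurd hx (by rw [Int.not_odd_iff_even]; exact ⟨y, by ring⟩)
    · exact Or.inr h
  constructor
  · ext x
    simp only [Set.mem_setOf_eq]
    constructor
    · intro hx
      rw [ha] at hx
      rcases hx with ⟨y, hy, rfl⟩ | ⟨y, hy, rfl⟩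
      · -- y ∈ Ωa, so y is even: y = 2k from ha
        rw [ha] at hy
        rcases hy with ⟨z, _, rfl⟩ | ⟨z, _, rfl⟩ <;> exact ⟨z, by ring⟩
      · rw [hc] at hy
        rcases hy with ⟨z, _, rfl⟩ | ⟨z, _, rfl⟩ <;> exact ⟨z, by ring⟩
    · rintro ⟨k, rfl⟩
      have : (2 * k : ℤ) ∈ Ωa ∪ Ωc := heven _ ⟨k, by ring⟩
      rw [ha]
      rcases this with h | h
      · exact Or.inl ⟨2 * k, h, by ring⟩
      · exact Or.inr ⟨2 * k, h, by ring⟩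
  · ext x
    simp only [Set.mem_setOf_eq]
    constructor
    · intro hx
      rw [hc] at hx
      rcases hx with ⟨y, hy, rfl⟩ | ⟨y, hy, rfl⟩
      · obtain ⟨k, hk⟩ := hbodd y hy
        exact ⟨k, by omega⟩
      · obtain ⟨k, hk⟩ := hdodd y hy
        exact ⟨k, by omega⟩
    · rintro ⟨k, rfl⟩
      have : (2 * k + 1 : ℤ) ∈ Ωb ∪ Ωd := hodd _ ⟨k, by ring⟩
      rw [hc]
      rcases this with h | h
      · exact Or.inl ⟨2 * k + 1, h, by ring⟩
      · exact Or.inr ⟨2 * k + 1, h, by ring⟩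
end

section
/- Given Ω_a = 4ℤ and Ω_c = 4ℤ + 2, every solution of the system Ω_b = (8ℤ + 1) ∪ (2Ω_b + 1), Ω_d = (8ℤ + 5) ∪ (2Ω_d + 1) with Ω_b, Ω_d ⊆ ℤ, Ω_b ∩ Ω_d = ∅, and Ω_b ∪ Ω_d = ℤ \ (2ℤ) (the odd integers), is of the form Ω_b = ⋃_{m≥1} (2^{m+2}ℤ + 2^m − 1) and Ω_d = ⋃_{m≥1} (2^{m+2}ℤ + 3·2^m − 1), up to adding the single point −1 to exactly one of the two sets. -/
/-- `B = ⋃_{m ≥ 1} (2^{m+2}ℤ + 2^m − 1)`. -/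
def paperB : Set ℤ := ⋃ m : ℕ, {x : ℤ | ∃ k : ℤ, x = 2 ^ (m + 3) * k + 2 ^ (m + 1) - 1}

/-- `D = ⋃_{m ≥ 1} (2^{m+2}ℤ + 3·2^m − 1)`. -/
def paperD : Set ℤ := ⋃ m : ℕ, {x : ℤ | ∃ k : ℤ, x = 2 ^ (m + 3) * k + 3 * 2 ^ (m + 1) - 1}

/-- 2-adic factorization over ℤ. -/
lemma int_two_adic (x : ℤ) (hx : x ≠ 0) : ∃ (n : ℕ) (u : ℤ), Odd u ∧ x = 2 ^ n * u := by
  have h0 : x.natAbs ≠ 0 := by simpa using hx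
  obtain ⟨n, m, hm, h⟩ := Nat.exists_eq_pow_mul_and_not_dvd h0 2 (by norm_num)
  have hmodd : Odd (m : ℤ) := by
    have : Odd m := Nat.odd_iff.mpr (Nat.two_dvd_ne_zero.mp hm)
    exact_mod_cast this
  rcases Int.natAbs_eq x with hx' | hx'
  · exact ⟨n, m, hmodd, by rw [hx', h]; push_cast; ring⟩
  · refine ⟨n, -m, hmodd.neg, ?_⟩
    rw [hx']
    push_cast [h]
    ring

/-- given `Ω_a = 4ℤ`, `Ω_c = 4ℤ + 2`, every solution of
`Ω_b = (8ℤ+1) ∪ (2Ω_b+1)`, `Ω_d = (8ℤ+5) ∪ (2Ω_d+1)` with `Ω_b, Ω_d` disjoint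
subsets of `ℤ` whose union is the odd integers, equals `(B, D)` up to adding the
single point `−1` to exactly one of the two sets. -/
theorem paperfolding_Ob_Od (Ωb Ωd : Set ℤ)
    (hb : Ωb = {x : ℤ | ∃ k : ℤ, x = 8 * k + 1} ∪ dblAdd1 Ωb)
    (hd : Ωd = {x : ℤ | ∃ k : ℤ, x = 8 * k + 5} ∪ dblAdd1 Ωd)
    (hdisj : Disjoint Ωb Ωd)
    (hcover : Ωb ∪ Ωd = {x : ℤ | Odd x}) :
    (Ωb = paperB ∪ {-1} ∧ Ωd = paperD) ∨
    (Ωb = paperB ∧ Ωd = paperD ∪ {-1}) := by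
  -- key induction
  have key : ∀ m : ℕ, ∀ k : ℤ,
      (2 ^ (m + 1) * (4 * k + 1) - 1 ∈ Ωb) ∧ (2 ^ (m + 1) * (4 * k + 3) - 1 ∈ Ωd) := by
    intro m
    induction m with
    | zero =>
      intro k
      constructor
      · rw [hb]; left; exact ⟨k, by ring⟩
      · rw [hd]; left; exact ⟨k, by ring⟩
    | succ n ih =>
      intro k
      constructor
      · rw [hb]; right; exact ⟨2 ^ (n + 1) * (4 * k + 1) - 1, (ih k).1, by ring⟩
      · rw [hd]; right; exact ⟨2 ^ (n + 1) * (4 * k + 3) - 1, (ih k).2, by ring⟩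
  have hBb : paperB ⊆ Ωb := by
    intro x hx
    simp only [paperB, Set.mem_iUnion, Set.mem_setOf_eq] at hx
    obtain ⟨m, k, rfl⟩ := hx
    have := (key m k).1
    have heq : 2 ^ (m + 1) * (4 * k + 1) - 1 = 2 ^ (m + 3) * k + 2 ^ (m + 1) - 1 := by ring
    rwa [heq] at this
  have hDd : paperD ⊆ Ωd := by
    intro x hx
    simp only [paperD, Set.mem_iUnion, Set.mem_setOf_eq] at hx
    obtain ⟨m, k, rfl⟩ := hx
    have := (key m k).2
    have heq : 2 ^ (m + 1) * (4 * k + 3) - 1 = 2 ^ (m + 3) * k + 3 * 2 ^ (m + 1) - 1 := by ring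
    rwa [heq] at this
  -- every odd x ≠ -1 is in paperB ∪ paperD
  have hcov : ∀ x : ℤ, Odd x → x ≠ -1 → x ∈ paperB ∨ x ∈ paperD := by
    intro x hodd hne
    have hx1 : x + 1 ≠ 0 := fun h => hne (by linarith)
    obtain ⟨n, u, hu, hfac⟩ := int_two_adic (x + 1) hx1
    -- n ≥ 1 since x+1 is even
    have hev : Even (x + 1) := by
      rcases hodd with ⟨j, hj⟩; exact ⟨j + 1, by omega⟩
    match n with
    | 0 =>
      exfalso
      simp only [pow_zero, one_mul] at hfac
      rw [hfac] at hev
      exact (Int.not_odd_iff_even.mpr hev) hu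
    | Nat.succ m =>
      rw [Nat.succ_eq_add_one] at hfac
      obtain ⟨j, hj⟩ := hu
      rcases Int.even_or_odd j with ⟨k, hk⟩ | ⟨k, hk⟩
      · left
        simp only [paperB, Set.mem_iUnion, Set.mem_setOf_eq]
        exact ⟨m, k, by rw [show x = 2 ^ (m + 1) * u - 1 from by omega, hj, hk]; ring⟩
      · right
        simp only [paperD, Set.mem_iUnion, Set.mem_setOf_eq]
        exact ⟨m, k, by rw [show x = 2 ^ (m + 1) * u - 1 from by omega, hj, hk]; ring⟩
  -- -1 not in paperB or paperD
  have hnB : (-1 : ℤ) ∉ paperB := by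
    intro h
    simp only [paperB, Set.mem_iUnion, Set.mem_setOf_eq] at h
    obtain ⟨m, k, hk⟩ := h
    have : 2 ^ (m + 1) * (4 * k + 1) = 0 := by
      have : (2:ℤ) ^ (m + 3) * k + 2 ^ (m + 1) = 0 := by omega
      rw [← this]; ring
    rcases mul_eq_zero.mp this with h | h
    · exact absurd h (pow_ne_zero _ (by norm_num))
    · omega
  have hnD : (-1 : ℤ) ∉ paperD := by
    intro h
    simp only [paperD, Set.mem_iUnion, Set.mem_setOf_eq] at h
    obtain ⟨m, k, hk⟩ := h
    have : 2 ^ (m + 1) * (4 * k + 3) = 0 := by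
      have : (2:ℤ) ^ (m + 3) * k + 3 * 2 ^ (m + 1) = 0 := by omega
      rw [← this]; ring
    rcases mul_eq_zero.mp this with h | h
    · exact absurd h (pow_ne_zero _ (by norm_num))
    · omega
  have hm1 : (-1 : ℤ) ∈ Ωb ∪ Ωd := by rw [hcover]; exact ⟨-1, by ring⟩
  have hsub : ∀ x, x ∈ Ωb ∪ Ωd → Odd x := fun x hx => by rwa [hcover] at hx
  rcases hm1 with h1b | h1d
  · left
    constructor
    · ext x
      constructor
      · intro hx
        by_cases hne : x = -1
        · right; simp [hne]
        · rcases hcov x (hsub x (Or.inl hx)) hne with h | h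
          · left; exact h
          · exact absurd (hdisj.ne_of_mem hx (hDd h)) (fun H => H rfl)
      · rintro (h | h)
        · exact hBb h
        · simp only [Set.mem_singleton_iff] at h; rw [h]; exact h1b
    · ext x
      constructor
      · intro hx
        have hne : x ≠ -1 := fun H => (hdisj.ne_of_mem h1b hx) H.symm
        rcases hcov x (hsub x (Or.inr hx)) hne with h | h
        · exact absurd (hdisj.ne_of_mem (hBb h) hx) (fun H => H rfl)
        · exact h
      · exact fun h => hDd h
  · right
    constructor
    · ext x
      constructor
      · intro hx
        have hne : x ≠ -1 := fun H => (hdisj.ne_of_mem hx h1d) H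
        rcases hcov x (hsub x (Or.inl hx)) hne with h | h
        · exact h
        · exact absurd (hdisj.ne_of_mem hx (hDd h)) (fun H => H rfl)
      · exact fun h => hBb h
    · ext x
      constructor
      · intro hx
        by_cases hne : x = -1
        · right; simp [hne]
        · rcases hcov x (hsub x (Or.inr hx)) hne with h | h
          · exact absurd (hdisj.ne_of_mem (hBb h) hx) (fun H => H rfl)
          · left; exact h
      · rintro (h | h)
        · exact hDd h
        · simp only [Set.mem_singleton_iff] at h; rw [h]; exact h1d
end

section
/- The sets B = ⋃_{m≥1}(2^{m+2}ℤ + 2^m − 1) and D = ⋃_{m≥1}(2^{m+2}ℤ + 3·2^m − 1) are disjoint, and B ∪ D ∪ {−1} equals the set of odd integers. -/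
/-- Existence of 2-adic factorization. -/
lemma aux_exists_odd_factor : ∀ n : ℕ, ∀ y : ℤ, y.natAbs ≤ n → y ≠ 0 →
    ∃ m : ℕ, ∃ u : ℤ, Odd u ∧ y = 2 ^ m * u := by
  intro n
  induction n with
  | zero => intro y hy h0; exfalso; exact h0 (Int.natAbs_eq_zero.mp (Nat.le_zero.mp hy))
  | succ n ih =>
    intro y hy h0
    rcases Int.even_or_odd y with ⟨z, hz⟩ | hodd
    · have hz' : y = 2 * z := by omega
      have hz0 : z ≠ 0 := by rintro rfl; simp at hz'; exact h0 hz'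
      have hlt : z.natAbs ≤ n := by
        have : y.natAbs = 2 * z.natAbs := by rw [hz']; simp [Int.natAbs_mul]
        omega
      obtain ⟨m, u, hu, h⟩ := ih z hlt hz0
      exact ⟨m + 1, u, hu, by rw [hz', h]; ring⟩
    · exact ⟨0, y, hodd, by ring⟩

/-- Uniqueness of 2-adic factorization. -/
lemma aux_uniq {a b : ℕ} {u v : ℤ} (hu : Odd u) (hv : Odd v)
    (h : 2 ^ a * u = 2 ^ b * v) : a = b ∧ u = v := by
  wlog hab : a ≤ b generalizing a b u v
  · obtain ⟨h1, h2⟩ := this hv hu h.symm (by omega); exact ⟨h1.symm, h2.symm⟩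
  obtain ⟨c, rfl⟩ := Nat.exists_eq_add_of_le hab
  have h2 : u = 2 ^ c * v := by
    have hpow : (2 : ℤ) ^ a ≠ 0 := by positivity
    have : 2 ^ a * u = 2 ^ a * (2 ^ c * v) := by rw [h]; ring
    exact mul_left_cancel₀ hpow this
  rcases Nat.eq_zero_or_pos c with rfl | hc
  · simp at h2; exact ⟨by omega, h2⟩
  · exfalso
    obtain ⟨d, rfl⟩ : ∃ d, c = d + 1 := ⟨c - 1, by omega⟩
    have : Even u := ⟨2 ^ d * v, by rw [h2]; ring⟩
    exact (Int.not_odd_iff_even.mpr this) hu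
/-- `B` and `D` are disjoint and `B ∪ D ∪ {−1}` is exactly the set
of odd integers. -/
theorem paperBD_partition_odds :
    Disjoint paperB paperD ∧ paperB ∪ paperD ∪ {-1} = {x : ℤ | Odd x} := by
  constructor
  · rw [Set.disjoint_left]
    rintro x hB hD
    simp only [paperB, paperD, Set.mem_iUnion, Set.mem_setOf_eq] at hB hD
    obtain ⟨m, k, hmk⟩ := hB
    obtain ⟨n, j, hnj⟩ := hD
    have h : (2:ℤ) ^ (m+1) * (4*k+1) = 2 ^ (n+1) * (4*j+3) := by
      have : x + 1 = x + 1 := rfl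
      rw [hmk] at hnj
      have : (2:ℤ) ^ (m + 3) * k + 2 ^ (m + 1) = 2 ^ (n + 3) * j + 3 * 2 ^ (n + 1) := by
        linarith
      calc (2:ℤ) ^ (m+1) * (4*k+1) = 2 ^ (m + 3) * k + 2 ^ (m + 1) := by ring
        _ = 2 ^ (n + 3) * j + 3 * 2 ^ (n + 1) := this
        _ = 2 ^ (n+1) * (4*j+3) := by ring
    obtain ⟨_, h2⟩ := aux_uniq ⟨2*k, by ring⟩ ⟨2*j+1, by ring⟩ h
    omega
  · ext x
    simp only [Set.mem_union, Set.mem_singleton_iff, Set.mem_setOf_eq, paperB, paperD,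
      Set.mem_iUnion, Set.mem_setOf_eq]
    constructor
    · rintro ((⟨m, k, rfl⟩ | ⟨m, k, rfl⟩) | rfl)
      · exact ⟨2 ^ (m+2) * k + 2 ^ m - 1, by ring⟩
      · exact ⟨2 ^ (m+2) * k + 3 * 2 ^ m - 1, by ring⟩
      · exact ⟨-1, by ring⟩
    · intro hx
      rcases eq_or_ne x (-1) with rfl | hne
      · right; rfl
      left
      have h0 : x + 1 ≠ 0 := by omega
      obtain ⟨m, u, hu, h⟩ := aux_exists_odd_factor (x+1).natAbs (x+1) le_rfl h0
      obtain ⟨w, hw⟩ := hu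
      rcases Nat.eq_zero_or_pos m with rfl | hm
      · exfalso
        simp at h
        obtain ⟨c, hc⟩ := hx
        omega
      obtain ⟨t, rfl⟩ : ∃ t, m = t + 1 := ⟨m - 1, by omega⟩
      rcases Int.even_or_odd w with ⟨j, hj⟩ | ⟨j, hj⟩
      · left
        refine ⟨t, j, ?_⟩
        have : x + 1 = 2 ^ (t+1) * (4*j+1) := by rw [h, hw, hj]; ring
        have : x = 2 ^ (t + 3) * j + 2 ^ (t + 1) - 1 := by linear_combination this - (2:ℤ)^(t+1) * (by ring : (4:ℤ)*j+1 = 4*j+1)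
        · exact this
      · right
        refine ⟨t, j, ?_⟩
        have h1 : x + 1 = 2 ^ (t+1) * (4*j+3) := by rw [h, hw, hj]; ring
        linarith [show (2:ℤ) ^ (t+1) * (4*j+3) = 2 ^ (t + 3) * j + 3 * 2 ^ (t + 1) from by ring]
end

section
/- Let p ∈ (0,1), q = 1 − p, and u, v > 0. The function g(k) = (d·p·q·sin²(πk(u−v))) / (p·sin²(πku) + q·sin²(πkv) − p·q·sin²(πk(u−v))), where d = 1/(pu + qv), has strictly positive denominator whenever k(u−v) ∉ ℤ; equivalently p·sin²(πku) + q·sin²(πkv) > p·q·sin²(πk(u−v)) whenever sin(πk(u−v)) ≠ 0. -/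
open Real

lemma rt_aux (p sa ca sb cb : ℝ) (hp0 : 0 < p) (hp1 : p < 1)
    (ha : sa ^ 2 + ca ^ 2 = 1) (hb : sb ^ 2 + cb ^ 2 = 1)
    (hk : sa * cb - ca * sb ≠ 0) :
    p * (1 - p) * (sa * cb - ca * sb) ^ 2 < p * sa ^ 2 + (1 - p) * sb ^ 2 := by
  have hq0 : 0 < 1 - p := by linarith
  have key : p * sa ^ 2 + (1 - p) * sb ^ 2 - p * (1 - p) * (sa * cb - ca * sb) ^ 2 =
      p ^ 2 * sa ^ 2 + (1 - p) ^ 2 * sb ^ 2 +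
        2 * p * (1 - p) * (sa * sb * (ca * cb + sa * sb)) := by
    linear_combination (-(p * (1 - p) * sa ^ 2)) * hb + (-(p * (1 - p) * sb ^ 2)) * ha
  have hsinpos : 0 < (sa * cb - ca * sb) ^ 2 := by positivity
  rcases eq_or_ne (sa * sb) 0 with h0 | h0
  · have hM : 0 < p ^ 2 * sa ^ 2 + (1 - p) ^ 2 * sb ^ 2 := by
      rcases eq_or_ne sa 0 with hsa | hsa
      · have hsb : sb ≠ 0 := by
          intro hsb; exact hk (by rw [hsa, hsb]; ring)
        have h2 : 0 < sb ^ 2 := by positivity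
        have := mul_pos (pow_pos hq0 2) h2
        nlinarith [sq_nonneg (p * sa)]
      · have h2 : 0 < sa ^ 2 := by positivity
        have := mul_pos (pow_pos hp0 2) h2
        nlinarith [sq_nonneg ((1 - p) * sb)]
    have hcross : 2 * p * (1 - p) * (sa * sb * (ca * cb + sa * sb)) = 0 := by
      rw [h0]; ring
    linarith [key, hM, hcross]
  · have hs2 : 0 < (sa * sb) ^ 2 := by positivity
    have hc : (ca * cb + sa * sb) ^ 2 < 1 := by nlinarith [hsinpos]
    have h1 : (2 * p * (1 - p) * (sa * sb * (ca * cb + sa * sb))) ^ 2 <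
        (p ^ 2 * sa ^ 2 + (1 - p) ^ 2 * sb ^ 2) ^ 2 := by
      nlinarith [mul_pos hs2 (sub_pos.mpr hc), sq_nonneg (p ^ 2 * sa ^ 2 - (1 - p) ^ 2 * sb ^ 2),
        mul_pos (mul_pos hp0 hq0) (mul_pos hp0 hq0)]
    have hMnn : 0 ≤ p ^ 2 * sa ^ 2 + (1 - p) ^ 2 * sb ^ 2 := by positivity
    have h2 : -(p ^ 2 * sa ^ 2 + (1 - p) ^ 2 * sb ^ 2) <
        2 * p * (1 - p) * (sa * sb * (ca * cb + sa * sb)) := by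
      nlinarith [h1, hMnn]
    linarith [key, h2]

/-- for `0 < p < 1`, `q = 1 − p`, `u, v > 0`, the denominator of
the diffuse background density `g` of a 1D binary random tiling is strictly
positive whenever `sin(πk(u−v)) ≠ 0`:
`p·sin²(πku) + q·sin²(πkv) > p·q·sin²(πk(u−v))`. -/
theorem random_tiling_denominator_pos (p q u v k : ℝ)
    (hp0 : 0 < p) (hp1 : p < 1) (hq : q = 1 - p) (hu : 0 < u) (hv : 0 < v)
    (hk : Real.sin (π * k * (u - v)) ≠ 0) :
    p * q * Real.sin (π * k * (u - v)) ^ 2 <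
      p * Real.sin (π * k * u) ^ 2 + q * Real.sin (π * k * v) ^ 2 := by
  subst hq
  have hab : π * k * (u - v) = π * k * u - π * k * v := by ring
  rw [hab] at hk ⊢
  rw [Real.sin_sub] at hk ⊢
  exact rt_aux p _ _ _ _ hp0 hp1 (Real.sin_sq_add_cos_sq _) (Real.sin_sq_add_cos_sq _) hk
end

section
/- The function f(z) = 2(e^{−z²}/√π − |z|·erfc(|z|)) is even, continuous, strictly positive, integrable on ℝ, and ∫_{−∞}^{∞} f(z) dz = 1. -/
/-! On `[0, ∞)` we have `fdistr = 2 ierfc`, where `ierfc x = e^{-x²}/√π - x erfc x` is the first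
iterated integral of `erfc`. Comparing `x e^{-t²}` with `t e^{-t²}` for `t > x` gives
`x erfc x ≤ e^{-x²}/√π`, so `ierfc ≥ 0`; since `ierfc' = -erfc < 0`, in fact `ierfc > 0`, and the
same bound dominates `fdistr` by the Gaussian `(2/√π) e^{-z²}`. The second iterated integral
`i2erfc = erfc/4 - x ierfc/2` satisfies `i2erfc' = -ierfc`, tends to `0` at infinity and equals
`1/4` at `0`, so `∫₀^∞ fdistr = 1/2`, and evenness doubles this. -/

open MeasureTheory Real

/-- The complementary error function `erfc(x) = (2/√π) ∫_x^∞ e^{−t²} dt`. -/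
noncomputable def erfc (x : ℝ) : ℝ :=
  (2 / Real.sqrt π) * ∫ t in Set.Ioi x, Real.exp (-t ^ 2)

/-- The limiting internal-space distribution
`f(z) = 2(e^{−z²}/√π − |z|·erfc(|z|))` of Fibonacci random tiling patches. -/
noncomputable def fdistr (z : ℝ) : ℝ :=
  2 * (Real.exp (-z ^ 2) / Real.sqrt π - |z| * erfc |z|)

open Set Filter Topology

theorem hasDerivAt_integral_Ioi {E : Type*} [NormedAddCommGroup E] [NormedSpace ℝ E]
    [CompleteSpace E] {f : ℝ → E} (hf : Integrable f) {x : ℝ} (hx : ContinuousAt f x) :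
    HasDerivAt (fun a => ∫ t in Ioi a, f t) (-f x) x := by
  have hsplit :
      (fun a => ∫ t in Ioi a, f t) = fun a => (∫ t in Ioi x, f t) - ∫ t in x..a, f t := by
    funext a
    rw [← intervalIntegral.integral_Ioi_sub_Ioi' hf.integrableOn hf.integrableOn, sub_sub_cancel]
  rw [hsplit, ← zero_sub]
  exact (hasDerivAt_const x _).sub <| intervalIntegral.integral_hasDerivAt_right
    hf.intervalIntegrable hf.aestronglyMeasurable.stronglyMeasurableAtFilter hx

theorem integrable_exp_neg_sq : Integrable (fun t : ℝ => exp (-t ^ 2)) := by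
  simpa using integrable_exp_neg_mul_sq one_pos

theorem hasDerivAt_exp_neg_sq (x : ℝ) :
    HasDerivAt (fun t : ℝ => exp (-t ^ 2)) (-(2 * x) * exp (-x ^ 2)) x := by
  simpa [mul_comm] using ((hasDerivAt_pow 2 x).neg).exp

theorem tendsto_mul_exp_neg_sq_atTop :
    Tendsto (fun x : ℝ => x * exp (-x ^ 2)) atTop (𝓝 0) := by
  have h := (tendsto_rpow_abs_mul_exp_neg_mul_sq_cocompact one_pos 1).mono_left atTop_le_cocompact
  refine h.congr' ?_
  filter_upwards [eventually_ge_atTop 0] with x hx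
  simp [abs_of_nonneg hx]

theorem tendsto_exp_neg_sq_atTop : Tendsto (fun x : ℝ => exp (-x ^ 2)) atTop (𝓝 0) :=
  tendsto_exp_atBot.comp <| tendsto_neg_atTop_atBot.comp <| tendsto_pow_atTop two_ne_zero

theorem integral_Ioi_mul_exp_neg_sq (x : ℝ) :
    ∫ t in Ioi x, t * exp (-t ^ 2) = exp (-x ^ 2) / 2 := by
  have hderiv (t : ℝ) : HasDerivAt (fun t : ℝ => -exp (-t ^ 2) / 2) (t * exp (-t ^ 2)) t :=
    ((hasDerivAt_exp_neg_sq t).fun_neg.div_const 2).congr_deriv (by ring)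
  have hlim : Tendsto (fun t : ℝ => -exp (-t ^ 2) / 2) atTop (𝓝 0) := by
    simpa using (tendsto_exp_neg_sq_atTop.neg).div_const 2
  rw [integral_Ioi_of_hasDerivAt_of_tendsto' (fun t _ => hderiv t)
    (by simpa using (integrable_mul_exp_neg_mul_sq one_pos).integrableOn) hlim]
  ring

theorem hasDerivAt_erfc (x : ℝ) : HasDerivAt erfc (-(2 / √π * exp (-x ^ 2))) x := by
  rw [← mul_neg]
  exact (hasDerivAt_integral_Ioi integrable_exp_neg_sq (by fun_prop)).const_mul (2 / √π)

theorem erfc_pos (x : ℝ) : 0 < erfc x := by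
  refine mul_pos (by positivity) ?_
  rw [setIntegral_pos_iff_support_of_nonneg_ae (.of_forall fun t => (exp_pos _).le)
    integrable_exp_neg_sq.integrableOn]
  simp [Function.support, exp_ne_zero]

theorem erfc_zero : erfc 0 = 1 := by
  have := sqrt_pos.2 pi_pos
  simp only [erfc]
  rw [show (fun t : ℝ => exp (-t ^ 2)) = fun t => exp (-1 * t ^ 2) by simp, integral_gaussian_Ioi]
  field_simp

theorem mul_erfc_le (x : ℝ) : x * erfc x ≤ exp (-x ^ 2) / √π := by
  have hle : x * ∫ t in Ioi x, exp (-t ^ 2) ≤ ∫ t in Ioi x, t * exp (-t ^ 2) := by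
    rw [← integral_const_mul]
    refine setIntegral_mono_on (integrable_exp_neg_sq.const_mul x).integrableOn
      (by simpa using (integrable_mul_exp_neg_mul_sq one_pos).integrableOn) measurableSet_Ioi
      fun t ht => ?_
    exact mul_le_mul_of_nonneg_right (le_of_lt ht) (exp_pos _).le
  rw [integral_Ioi_mul_exp_neg_sq] at hle
  calc x * erfc x = 2 / √π * (x * ∫ t in Ioi x, exp (-t ^ 2)) := by rw [erfc]; ring
    _ ≤ 2 / √π * (exp (-x ^ 2) / 2) := by gcongr
    _ = exp (-x ^ 2) / √π := by ring

theorem tendsto_erfc_atTop : Tendsto erfc atTop (𝓝 0) := by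
  refine tendsto_of_tendsto_of_tendsto_of_le_of_le' tendsto_const_nhds
    (tendsto_exp_neg_sq_atTop.div_const √π |>.trans (by simp))
    (.of_forall fun x => (erfc_pos x).le) ?_
  filter_upwards [eventually_ge_atTop 1] with x hx
  exact (le_mul_of_one_le_left (erfc_pos x).le hx).trans (mul_erfc_le x)

noncomputable def ierfc (x : ℝ) : ℝ := exp (-x ^ 2) / √π - x * erfc x

theorem hasDerivAt_ierfc (x : ℝ) : HasDerivAt ierfc (-erfc x) x :=
  (((hasDerivAt_exp_neg_sq x).div_const √π).sub
    ((hasDerivAt_id x).mul (hasDerivAt_erfc x))).congr_deriv (by simp only [id]; ring)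

theorem ierfc_nonneg (x : ℝ) : 0 ≤ ierfc x := sub_nonneg.2 (mul_erfc_le x)

theorem strictAnti_ierfc : StrictAnti ierfc :=
  strictAnti_of_deriv_neg fun x => by simpa [(hasDerivAt_ierfc x).deriv] using erfc_pos x

theorem ierfc_pos (x : ℝ) : 0 < ierfc x :=
  (ierfc_nonneg (x + 1)).trans_lt (strictAnti_ierfc (lt_add_one x))

theorem ierfc_le {x : ℝ} (hx : 0 ≤ x) : ierfc x ≤ exp (-x ^ 2) / √π :=
  sub_le_self _ (mul_nonneg hx (erfc_pos x).le)

theorem tendsto_mul_ierfc_atTop : Tendsto (fun x => x * ierfc x) atTop (𝓝 0) := by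
  refine tendsto_of_tendsto_of_tendsto_of_le_of_le' tendsto_const_nhds
    (tendsto_mul_exp_neg_sq_atTop.div_const √π |>.trans (by simp)) ?_ ?_
  all_goals filter_upwards [eventually_ge_atTop 0] with x hx
  · exact mul_nonneg hx (ierfc_nonneg x)
  · rw [mul_div_assoc]
    exact mul_le_mul_of_nonneg_left (ierfc_le hx) hx

noncomputable def i2erfc (x : ℝ) : ℝ := erfc x / 4 - x * ierfc x / 2

theorem hasDerivAt_i2erfc (x : ℝ) : HasDerivAt i2erfc (-ierfc x) x :=
  (((hasDerivAt_erfc x).div_const 4).sub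
    (((hasDerivAt_id x).mul (hasDerivAt_ierfc x)).div_const 2)).congr_deriv
    (by simp only [id, ierfc]; ring)

theorem i2erfc_zero : i2erfc 0 = 1 / 4 := by
  simp [i2erfc, erfc_zero]

theorem tendsto_i2erfc_atTop : Tendsto i2erfc atTop (𝓝 0) := by
  have h := (tendsto_erfc_atTop.div_const 4).sub (tendsto_mul_ierfc_atTop.div_const 2)
  rwa [zero_div, zero_div, sub_zero] at h

theorem fdistr_eq_ierfc_abs (z : ℝ) : fdistr z = 2 * ierfc |z| := by
  simp [fdistr, ierfc, sq_abs]

theorem fdistr_abs (z : ℝ) : fdistr |z| = fdistr z := by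
  simp [fdistr_eq_ierfc_abs]

theorem continuous_ierfc : Continuous ierfc :=
  continuous_iff_continuousAt.2 fun x => (hasDerivAt_ierfc x).continuousAt

theorem continuous_fdistr : Continuous fdistr := by
  have := continuous_ierfc
  rw [funext fdistr_eq_ierfc_abs]
  fun_prop

theorem integrable_fdistr : Integrable fdistr := by
  refine (integrable_exp_neg_sq.const_mul (2 / √π)).mono' continuous_fdistr.aestronglyMeasurable
    (.of_forall fun z => ?_)
  rw [fdistr_eq_ierfc_abs, Real.norm_of_nonneg (mul_nonneg zero_le_two (ierfc_nonneg _))]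
  calc 2 * ierfc |z| ≤ 2 * (exp (-|z| ^ 2) / √π) := by gcongr; exact ierfc_le (abs_nonneg z)
    _ = 2 / √π * exp (-z ^ 2) := by rw [sq_abs]; ring

theorem integral_Ioi_fdistr : ∫ z in Ioi 0, fdistr z = 1 / 2 := by
  have hderiv (x : ℝ) (hx : x ∈ Ici 0) : HasDerivAt (fun x => -2 * i2erfc x) (fdistr x) x := by
    rw [fdistr_eq_ierfc_abs, abs_of_nonneg hx]
    simpa using (hasDerivAt_i2erfc x).const_mul (-2)
  rw [integral_Ioi_of_hasDerivAt_of_tendsto' hderiv integrable_fdistr.integrableOn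
    (by simpa using tendsto_i2erfc_atTop.const_mul (-2)), i2erfc_zero]
  norm_num

/-- `f` is even, continuous, strictly positive, integrable on `ℝ`,
and `∫ f = 1`. -/
theorem fdistr_properties :
    (∀ z : ℝ, fdistr (-z) = fdistr z) ∧
    Continuous fdistr ∧
    (∀ z : ℝ, 0 < fdistr z) ∧
    Integrable fdistr ∧
    (∫ z : ℝ, fdistr z) = 1 := by
  refine ⟨fun z => by rw [← fdistr_abs, abs_neg, fdistr_abs], continuous_fdistr,
    fun z => by simpa [fdistr_eq_ierfc_abs] using ierfc_pos |z|, integrable_fdistr, ?_⟩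
  rw [← integral_congr_ae (.of_forall fdistr_abs), integral_comp_abs, integral_Ioi_fdistr]
  norm_num
end
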